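/- For every real λ > 0, every real t ≥ 0, and every x ∈ ℤ^d, the discrete heat kernel satisfies ∑_{y ∈ ℤ^d} p_t(x,y) e^{λ|y|} ≤ exp(2dt(e^λ − 1)) · e^{λ|x|} (in particular the sum on the left is finite). -/

import Mathlib

noncomputable section

open scoped ENNReal BigOperators

namespace Paper

variable {α : Type*}

/-- The real Hilbert space `ℓ²` over the index set `α`. -/
abbrev L2 (α : Type*) := lp (fun _ : α => ℝ) 2

lemma memℓp_comp (e : α ≃ α) (f : L2 α) : Memℓp (fun x => f (e x)) (2 : ℝ≥0∞) := by
  have h2 : (0:ℝ) < (2 : ℝ≥0∞).toReal := by norm_num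
  rw [memℓp_gen_iff h2]
  have hf := lp.memℓp f
  rw [memℓp_gen_iff h2] at hf
  exact (e.summable_iff (f := fun i => ‖f i‖ ^ (2 : ℝ≥0∞).toReal)).2 hf

/-- Reindexing along an equivalence of the index set, as a bounded operator on `ℓ²`. -/
def shiftCLM (e : α ≃ α) : L2 α →L[ℝ] L2 α :=
  LinearMap.mkContinuous
    { toFun := fun f => ⟨fun x => f (e x), memℓp_comp e f⟩
      map_add' := by
        intro f g; apply lp.ext; funext x; simp [lp.coeFn_add]; rfl
      map_smul' := by
        intro c f; apply lp.ext; funext x; simp [lp.coeFn_smul] }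
    1
    (by
      intro f
      rw [one_mul]
      have h2 : (0:ℝ) < (2 : ℝ≥0∞).toReal := by norm_num
      have key : ∀ g : L2 α, ‖g‖ = (∑' i, ‖g i‖ ^ (2 : ℝ≥0∞).toReal) ^ ((2 : ℝ≥0∞).toReal)⁻¹ := by
        intro g
        rw [lp.norm_eq_tsum_rpow h2 g, one_div]
      rw [key, key]
      refine le_of_eq (congrArg (· ^ ((2 : ℝ≥0∞).toReal)⁻¹) ?_)
      exact e.tsum_eq (f := fun i => ‖f i‖ ^ (2 : ℝ≥0∞).toReal))

@[simp] lemma shiftCLM_apply (e : α ≃ α) (f : L2 α) (x : α) :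
    shiftCLM e f x = f (e x) := rfl

/-- The discrete Laplacian on `ℤ^d`, as a bounded operator on `ℓ²(ℤ^d)`:
`(Δ f)(x) = ∑_{y ∈ N(x)} f(y) - 2d f(x)`, where the set `N(x)` of nearest neighbors of
`x` (points of `ℤ^d` at Euclidean distance 1 from `x`) consists of the `2d` points
`x ± eᵢ`, `1 ≤ i ≤ d`. -/
def discreteLaplacian (d : ℕ) : L2 (Fin d → ℤ) →L[ℝ] L2 (Fin d → ℤ) :=
  (∑ i : Fin d,
      (shiftCLM (Equiv.addRight (Pi.single i 1 : Fin d → ℤ)) +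
       shiftCLM (Equiv.addRight (-Pi.single i 1 : Fin d → ℤ))))
  - (2 * (d : ℝ)) • ContinuousLinearMap.id ℝ (L2 (Fin d → ℤ))

/-- The discrete heat kernel `p_t(x,y) := (exp(tΔ) δ_y)(x)` on `ℤ^d`, where `exp` is the
exponential of bounded operators and `δ_y ∈ ℓ²(ℤ^d)` is the indicator function of `y`. -/
def heatKernel (d : ℕ) (t : ℝ) (x y : Fin d → ℤ) : ℝ :=
  (NormedSpace.exp (t • discreteLaplacian d) (lp.single 2 y (1:ℝ))) x

/-- The generator of continuous-time simple symmetric random walk on `ℤ` with jump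
rate `lam`: `(Q_lam f)(x) = (lam/2)(f(x+1)+f(x-1)) - lam·f(x)`. -/
def walkGen (lam : ℝ) : L2 ℤ →L[ℝ] L2 ℤ :=
  (lam / 2) • (shiftCLM (Equiv.addRight (1:ℤ)) + shiftCLM (Equiv.addRight (-1:ℤ)))
    - lam • ContinuousLinearMap.id ℝ (L2 ℤ)

/-- `p_t^{(lam)}(x) := (exp(t Q_lam) δ_0)(x)`, the transition probability of the
rate-`lam` continuous-time simple symmetric random walk on `ℤ` started at `0`. -/
def walkKernel (lam : ℝ) (t : ℝ) (x : ℤ) : ℝ :=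
  (NormedSpace.exp (t • walkGen lam) (lp.single 2 (0:ℤ) (1:ℝ))) x

/-- `|x| = ∑ᵢ |xᵢ|` for `x ∈ ℤ^d`. -/
def l1norm {d : ℕ} (x : Fin d → ℤ) : ℕ := ∑ i, (x i).natAbs

end Paper

open Paper


/-!
Write `Δ = A - 2d` with `A` the adjacency operator of `ℤ^d`. Then
`exp (tΔ) = e^{-2dt} ∑ₙ tⁿ/n! Aⁿ`, and the entries `Aⁿ(x, y)` count nearest-neighbour paths, so
they are nonnegative. The weight `w(y) = e^{λ|y|}` satisfies `A w ≤ 2d e^λ w` because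
`|y ± eᵢ| ≤ |y| + 1`, hence `∑_y Aⁿ(x, y) w(y) ≤ (2d e^λ)ⁿ w(x)`. Exchanging the sums over `n` and
`y` (Tonelli, in `ℝ≥0∞`) bounds the moment by `e^{-2dt} e^{2dt e^λ} w(x)`.
-/

open NormedSpace
open scoped Nat

theorem NormedSpace.exp_add_smul_one {𝔸 : Type*} [NormedRing 𝔸] [NormedAlgebra ℝ 𝔸]
    [CompleteSpace 𝔸] (a : 𝔸) (c : ℝ) : exp (a + c • (1 : 𝔸)) = Real.exp c • exp a := by
  have hball : ∀ b : 𝔸, b ∈ Metric.eball 0 (expSeries ℝ 𝔸).radius := fun b => by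
    simp [expSeries_radius_eq_top]
  rw [exp_add_of_commute_of_mem_ball ((Commute.one_right a).smul_right c) (hball _) (hball _),
    ← Algebra.algebraMap_eq_smul_one, ← algebraMap_exp_comm, ← Real.exp_eq_exp_ℝ,
    ← Algebra.commutes, Algebra.smul_def]

theorem Real.hasSum_exp_neg_mul_pow_div_factorial (a s K w : ℝ) :
    HasSum (fun n : ℕ => Real.exp (-a) * (s ^ n / n !) * (K ^ n * w))
      (Real.exp (s * K - a) * w) := by
  have hexp := (expSeries_div_hasSum_exp (s * K)).mul_left (Real.exp (-a) * w)
  rw [← Real.exp_eq_exp_ℝ, mul_right_comm, ← Real.exp_add, neg_add_eq_sub] at hexp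
  exact hexp.congr_fun fun n => by ring

theorem summable_and_tsum_le_of_hasSum {ι α : Type*} {g : ι → α → ℝ} {F : α → ℝ} {b : ι → ℝ}
    {R : ℝ} (hg : ∀ n y, 0 ≤ g n y) (hF : ∀ y, HasSum (g · y) (F y)) (hb₀ : ∀ n, 0 ≤ b n)
    (hb : ∀ n, ∑' y, ENNReal.ofReal (g n y) ≤ ENNReal.ofReal (b n)) (hR : HasSum b R) :
    Summable F ∧ ∑' y, F y ≤ R := by
  have hF₀ : ∀ y, 0 ≤ F y := fun y => (hF y).nonneg (hg · y)
  have hbound : ∑' y, ENNReal.ofReal (F y) ≤ ENNReal.ofReal R :=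
    calc ∑' y, ENNReal.ofReal (F y)
        = ∑' y, ∑' n, ENNReal.ofReal (g n y) := by
          refine tsum_congr fun y => ?_
          rw [← (hF y).tsum_eq, ENNReal.ofReal_tsum_of_nonneg (hg · y) (hF y).summable]
      _ = ∑' n, ∑' y, ENNReal.ofReal (g n y) := ENNReal.tsum_comm
      _ ≤ ∑' n, ENNReal.ofReal (b n) := ENNReal.tsum_le_tsum hb
      _ = ENNReal.ofReal R := by rw [← hR.tsum_eq, ENNReal.ofReal_tsum_of_nonneg hb₀ hR.summable]
  have hfin : ∑' y, ENNReal.ofReal (F y) ≠ ⊤ := ne_top_of_le_ne_top ENNReal.ofReal_ne_top hbound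
  have hsum : Summable F :=
    (ENNReal.summable_toReal hfin).congr fun y => ENNReal.toReal_ofReal (hF₀ y)
  refine ⟨hsum, ?_⟩
  rw [← ENNReal.ofReal_le_ofReal_iff ((hR.nonneg hb₀)), ENNReal.ofReal_tsum_of_nonneg hF₀ hsum]
  exact hbound

namespace Paper

variable {d : ℕ}

theorem l1norm_add_le (x y : Fin d → ℤ) : l1norm (x + y) ≤ l1norm x + l1norm y := by
  rw [l1norm, l1norm, l1norm, ← Finset.sum_add_distrib]
  exact Finset.sum_le_sum fun i _ => Int.natAbs_add_le _ _

@[simp]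
theorem l1norm_neg (x : Fin d → ℤ) : l1norm (-x) = l1norm x := by
  simp [l1norm]

@[simp]
theorem l1norm_single (i : Fin d) (c : ℤ) : l1norm (Pi.single i c) = c.natAbs := by
  rw [l1norm, Finset.sum_eq_single i (fun j _ hj => by simp [Pi.single_eq_of_ne hj]) (by simp)]
  simp

def adjacencyOperator (d : ℕ) : L2 (Fin d → ℤ) →L[ℝ] L2 (Fin d → ℤ) :=
  ∑ i : Fin d,
    (shiftCLM (Equiv.addRight (Pi.single i 1 : Fin d → ℤ)) +
      shiftCLM (Equiv.addRight (-Pi.single i 1 : Fin d → ℤ)))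

theorem discreteLaplacian_eq_adjacencyOperator_sub (d : ℕ) :
    discreteLaplacian d = adjacencyOperator d - (2 * (d : ℝ)) • 1 := rfl

theorem adjacencyOperator_apply (f : L2 (Fin d → ℤ)) (x : Fin d → ℤ) :
    adjacencyOperator d f x = ∑ i, (f (x + Pi.single i 1) + f (x - Pi.single i 1)) := by
  rw [adjacencyOperator, sum_apply, lp.coeFn_sum, Finset.sum_apply]
  simp [sub_eq_add_neg]

def pathCount (d n : ℕ) (x y : Fin d → ℤ) : ℝ := (adjacencyOperator d ^ n) (lp.single 2 y 1) x

theorem pathCount_zero (x y : Fin d → ℤ) : pathCount d 0 x y = if x = y then 1 else 0 := by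
  simp [pathCount, lp.single_apply, Pi.single_apply]

theorem pathCount_succ (n : ℕ) (x y : Fin d → ℤ) :
    pathCount d (n + 1) x y =
      ∑ i, (pathCount d n (x + Pi.single i 1) y + pathCount d n (x - Pi.single i 1) y) := by
  have hpow : (adjacencyOperator d ^ (n + 1)) (lp.single 2 y 1) =
      adjacencyOperator d ((adjacencyOperator d ^ n) (lp.single 2 y 1)) := by
    rw [pow_succ', mul_apply_eq_comp]
  rw [pathCount, hpow, adjacencyOperator_apply]
  rfl

theorem pathCount_nonneg (n : ℕ) (x y : Fin d → ℤ) : 0 ≤ pathCount d n x y := by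
  induction n generalizing x with
  | zero => rw [pathCount_zero]; split_ifs <;> norm_num
  | succ n ih =>
    rw [pathCount_succ]
    exact Finset.sum_nonneg fun i _ => add_nonneg (ih _) (ih _)

theorem hasSum_heatKernel (t : ℝ) (x y : Fin d → ℤ) :
    HasSum (fun n => Real.exp (-(2 * d * t)) * (t ^ n / n !) * pathCount d n x y)
      (heatKernel d t x y) := by
  have hsplit : t • discreteLaplacian d = t • adjacencyOperator d + (-(2 * d * t)) • 1 := by
    rw [discreteLaplacian_eq_adjacencyOperator_sub, smul_sub, smul_smul, sub_eq_add_neg, ← neg_smul,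
      mul_comm t]
  let entry : (L2 (Fin d → ℤ) →L[ℝ] L2 (Fin d → ℤ)) →L[ℝ] ℝ :=
    (lp.evalCLM ℝ (fun _ => ℝ) 2 x).comp (ContinuousLinearMap.apply ℝ _ (lp.single 2 y 1))
  have hseries := ((exp_series_hasSum_exp' (𝕂 := ℝ) (t • adjacencyOperator d)).mapL entry).mul_left
    (Real.exp (-(2 * d * t)))
  have hterm : ∀ n : ℕ, entry ((n !⁻¹ : ℝ) • (t • adjacencyOperator d) ^ n) =
      t ^ n / n ! * pathCount d n x y := fun n => by
    simp only [entry, smul_pow, ContinuousLinearMap.comp_apply, ContinuousLinearMap.apply_apply,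
      map_smul, lp.evalCLM, LinearMap.mkContinuous_apply, lp.evalₗ_apply, smul_eq_mul, pathCount]
    ring
  have hsum : Real.exp (-(2 * d * t)) * entry (exp (t • adjacencyOperator d)) = heatKernel d t x y := by
    simp only [heatKernel, hsplit, exp_add_smul_one, entry, ContinuousLinearMap.comp_apply,
      ContinuousLinearMap.apply_apply, smul_apply, smul_eq_mul,
      lp.evalCLM, LinearMap.mkContinuous_apply, lp.evalₗ_apply, lp.coeFn_smul, Pi.smul_apply]
  rw [← hsum]
  simpa only [hterm, mul_assoc] using hseries

theorem exp_mul_l1norm_add_le {lam : ℝ} (hlam : 0 ≤ lam) (x v : Fin d → ℤ) :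
    Real.exp (lam * l1norm (x + v)) ≤ Real.exp (lam * l1norm v) * Real.exp (lam * l1norm x) := by
  rw [← Real.exp_add, Real.exp_le_exp, ← mul_add]
  exact mul_le_mul_of_nonneg_left (by exact_mod_cast (l1norm_add_le x v).trans_eq (add_comm _ _))
    hlam

theorem sum_exp_mul_l1norm_neighbors_le {lam : ℝ} (hlam : 0 ≤ lam) (x : Fin d → ℤ) :
    ∑ i, (Real.exp (lam * l1norm (x + Pi.single i 1)) +
        Real.exp (lam * l1norm (x - Pi.single i 1))) ≤
      2 * d * Real.exp lam * Real.exp (lam * l1norm x) := by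
  have hneighbor : ∀ i, Real.exp (lam * l1norm (x + Pi.single i 1)) +
      Real.exp (lam * l1norm (x - Pi.single i 1)) ≤
        2 * (Real.exp lam * Real.exp (lam * l1norm x)) :=
    fun i => by
      have hadd := exp_mul_l1norm_add_le hlam x (Pi.single i 1)
      have hsub := exp_mul_l1norm_add_le hlam x (-Pi.single i 1)
      simp only [l1norm_single, l1norm_neg, Int.natAbs_one, Nat.cast_one, mul_one,
        ← sub_eq_add_neg] at hadd hsub
      linarith
  calc _ ≤ ∑ _i : Fin d, 2 * (Real.exp lam * Real.exp (lam * l1norm x)) :=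
        Finset.sum_le_sum fun i _ => hneighbor i
    _ = _ := by
      rw [Finset.sum_const, Finset.card_univ, Fintype.card_fin, nsmul_eq_mul]
      ring

theorem tsum_pathCount_mul_le_of_neighbors_le (W : (Fin d → ℤ) → ℝ≥0∞) (C : ℝ≥0∞)
    (hW : ∀ x, ∑ i, (W (x + Pi.single i 1) + W (x - Pi.single i 1)) ≤ C * W x)
    (n : ℕ) (x : Fin d → ℤ) :
    ∑' y, ENNReal.ofReal (pathCount d n x y) * W y ≤ C ^ n * W x := by
  induction n generalizing x with
  | zero =>
    rw [tsum_eq_single x fun y hy => by simp [pathCount_zero, Ne.symm hy]]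
    simp [pathCount_zero]
  | succ n ih =>
    calc ∑' y, ENNReal.ofReal (pathCount d (n + 1) x y) * W y
        = ∑ i, (∑' y, ENNReal.ofReal (pathCount d n (x + Pi.single i 1) y) * W y +
            ∑' y, ENNReal.ofReal (pathCount d n (x - Pi.single i 1) y) * W y) := by
          simp_rw [pathCount_succ, ENNReal.ofReal_sum_of_nonneg fun i _ =>
            add_nonneg (pathCount_nonneg _ _ _) (pathCount_nonneg _ _ _),
            ENNReal.ofReal_add (pathCount_nonneg _ _ _) (pathCount_nonneg _ _ _), Finset.sum_mul,
            add_mul]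
          rw [Summable.tsum_finsetSum fun i _ => ENNReal.summable]
          simp_rw [ENNReal.tsum_add]
      _ ≤ ∑ i, (C ^ n * W (x + Pi.single i 1) + C ^ n * W (x - Pi.single i 1)) := by
          gcongr <;> exact ih _
      _ = C ^ n * ∑ i, (W (x + Pi.single i 1) + W (x - Pi.single i 1)) := by
          simp_rw [Finset.mul_sum, mul_add]
      _ ≤ C ^ (n + 1) * W x := by
          rw [pow_succ, mul_assoc]
          gcongr
          exact hW x

theorem tsum_pathCount_mul_exp_le {lam : ℝ} (hlam : 0 ≤ lam) (n : ℕ) (x : Fin d → ℤ) :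
    ∑' y, ENNReal.ofReal (pathCount d n x y * Real.exp (lam * l1norm y)) ≤
      ENNReal.ofReal ((2 * d * Real.exp lam) ^ n * Real.exp (lam * l1norm x)) := by
  have hW : ∀ x : Fin d → ℤ, ∑ i, (ENNReal.ofReal (Real.exp (lam * l1norm (x + Pi.single i 1))) +
      ENNReal.ofReal (Real.exp (lam * l1norm (x - Pi.single i 1)))) ≤
      ENNReal.ofReal (2 * d * Real.exp lam) * ENNReal.ofReal (Real.exp (lam * l1norm x)) :=
    fun x => by
      rw [← ENNReal.ofReal_mul (by positivity)]
      refine (le_of_eq ?_).trans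
        (ENNReal.ofReal_le_ofReal (sum_exp_mul_l1norm_neighbors_le hlam x))
      rw [ENNReal.ofReal_sum_of_nonneg fun i _ => by positivity]
      simp_rw [ENNReal.ofReal_add (Real.exp_nonneg _) (Real.exp_nonneg _)]
  have hC : (0 : ℝ) ≤ 2 * d * Real.exp lam := by positivity
  simp_rw [ENNReal.ofReal_mul (pathCount_nonneg _ _ _), ENNReal.ofReal_mul (pow_nonneg hC n),
    ENNReal.ofReal_pow hC]
  exact tsum_pathCount_mul_le_of_neighbors_le _ _ hW n x

end Paper

theorem heatKernel_exp_moment_general {d : ℕ} (lam : ℝ) (hlam : 0 < lam)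
    (t : ℝ) (ht : 0 ≤ t) (x : Fin d → ℤ) :
    (Summable fun y : Fin d → ℤ =>
      heatKernel d t x y * Real.exp (lam * (l1norm y : ℝ))) ∧
      ∑' y : Fin d → ℤ, heatKernel d t x y * Real.exp (lam * (l1norm y : ℝ)) ≤
        Real.exp (2 * d * t * (Real.exp lam - 1)) * Real.exp (lam * (l1norm x : ℝ)) := by
  set c : ℕ → ℝ := fun n => Real.exp (-(2 * d * t)) * (t ^ n / n !) with hc
  have hc₀ : ∀ n, 0 ≤ c n := fun n => by positivity
  refine summable_and_tsum_le_of_hasSum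
    (g := fun n y => c n * (pathCount d n x y * Real.exp (lam * l1norm y)))
    (b := fun n => c n * ((2 * d * Real.exp lam) ^ n * Real.exp (lam * l1norm x)))
    (fun n y => mul_nonneg (hc₀ n) (mul_nonneg (pathCount_nonneg n x y) (Real.exp_nonneg _)))
    (fun y => ?_) (fun n => by positivity) (fun n => ?_) ?_
  · simpa only [hc, mul_assoc] using (hasSum_heatKernel t x y).mul_right (Real.exp (lam * l1norm y))
  · simp_rw [ENNReal.ofReal_mul (hc₀ n), ENNReal.tsum_mul_left]
    gcongr
    exact tsum_pathCount_mul_exp_le hlam.le n x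
  · rw [show 2 * d * t * (Real.exp lam - 1) = t * (2 * d * Real.exp lam) - 2 * d * t by ring]
    exact Real.hasSum_exp_neg_mul_pow_div_factorial _ _ _ _

/-- Hypothesis (H3) with `λ'(λ) = λ` (condition (4.3)) for simple symmetric random walk,
with explicit constant: `∑_y p_t(x,y) e^{λ|y|} ≤ exp(2dt(e^λ - 1)) e^{λ|x|}`. -/
theorem heatKernel_exp_moment {d : ℕ} (hd : 1 ≤ d) (lam : ℝ) (hlam : 0 < lam)
    (t : ℝ) (ht : 0 ≤ t) (x : Fin d → ℤ) :
    (Summable fun y : Fin d → ℤ =>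
      heatKernel d t x y * Real.exp (lam * (l1norm y : ℝ))) ∧
      ∑' y : Fin d → ℤ, heatKernel d t x y * Real.exp (lam * (l1norm y : ℝ)) ≤
        Real.exp (2 * d * t * (Real.exp lam - 1)) * Real.exp (lam * (l1norm x : ℝ)) :=
  heatKernel_exp_moment_general lam hlam t ht x
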